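/- Let T be a string of length n and τ ∈ [1..n). Define bitmasks S, E ∈ {0,1}^n by: S[a] = 1 if and only if some run T[a..e) ∈ RUNS_{2τ,⌊τ/3⌋}(T) starts at position a; E[i] = 1 if and only if i = e − 2τ + 1 for some run T[a..e) ∈ RUNS_{2τ,⌊τ/3⌋}(T); all other entries are 0. Then for every i ∈ [0..n), the partial sum Σ_{j=0}^{i} (S[j] − E[j]) belongs to {0, 1}; moreover, if i + 2τ ≤ n, then per(T[i..i+2τ)) ≤ ⌊τ/3⌋ holds if and only if Σ_{j=0}^{i} (S[j] − E[j]) = 1. -/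
import Mathlib


namespace SyncFormal

/-- The fragment `T[i..j)` of a string `T`. -/
def frag {α : Type*} (T : List α) (i j : ℕ) : List α :=
  (T.drop i).take (j - i)

/-- `p` is a period of the string `S`. -/
def IsPeriod {α : Type*} (S : List α) (p : ℕ) : Prop :=
  1 ≤ p ∧ p ≤ S.length ∧ ∀ i : ℕ, i + p < S.length → S[i]? = S[i + p]?

/-- `per S`: the smallest period of `S`. -/
noncomputable def per {α : Type*} (S : List α) : ℕ :=
  sInf {p | IsPeriod S p}

/-- `Sync` is a `τ`-synchronizing set of `T`. -/
def IsSyncSet {α : Type*} (T : List α) (τ : ℕ) (Sync : Set ℕ) : Prop :=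
  (∀ i ∈ Sync, i + 2 * τ ≤ T.length) ∧
  (∀ i j : ℕ, i + 2 * τ ≤ T.length → j + 2 * τ ≤ T.length → i ∈ Sync →
    frag T i (i + 2 * τ) = frag T j (j + 2 * τ) → j ∈ Sync) ∧
  (∀ i : ℕ, i + 3 * τ ≤ T.length + 1 →
    (Set.Ico i (i + τ) ∩ Sync = ∅ ↔ 3 * per (frag T i (i + 3 * τ - 1)) ≤ τ))

/-- `T[b..e)` is a run (maximal repetition) in `T`. -/
def IsRun {α : Type*} (T : List α) (b e : ℕ) : Prop :=
  b < e ∧ e ≤ T.length ∧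
  2 * per (frag T b e) ≤ e - b ∧
  (b = 0 ∨ T[b - 1]? ≠ T[b - 1 + per (frag T b e)]?) ∧
  (e = T.length ∨ T[e]? ≠ T[e - per (frag T b e)]?)

/-- `T[b..e)` is a run of length at least `ℓ` and period at most `p`
(i.e., an element of `RUNS_{ℓ,p}(T)`). -/
def IsRunLP {α : Type*} (T : List α) (ℓ p b e : ℕ) : Prop :=
  IsRun T b e ∧ ℓ ≤ e - b ∧ per (frag T b e) ≤ p

/-- `λ_k = (8/7)^⌊k/2⌋`. -/
noncomputable def lam (k : ℕ) : ℝ := (8 / 7 : ℝ) ^ (k / 2)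

/-- `α_0 = 1`, `α_{k+1} = α_k + ⌊λ_k⌋`. -/
noncomputable def alph : ℕ → ℕ
  | 0 => 1
  | k + 1 => alph k + ⌊lam k⌋₊

/-- `m`-fold concatenation `R^m`. -/
def listPow {α : Type*} (R : List α) : ℕ → List α
  | 0 => []
  | m + 1 => R ++ listPow R m

/-- The length of the primitive root of `S`
(the shortest prefix `R` of `S` with `S = R^m` for some `m ≥ 1`). -/
noncomputable def primRootLen {α : Type*} (S : List α) : ℕ :=
  sInf {r | 0 < r ∧ ∃ m : ℕ, 1 ≤ m ∧ S = listPow (S.take r) m}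

/-- `i` and `j` are consecutive elements of the set `S`. -/
def Consecutive (S : Set ℕ) (i j : ℕ) : Prop :=
  i ∈ S ∧ j ∈ S ∧ i < j ∧ ∀ m ∈ S, m ≤ i ∨ j ≤ m

/-- `(B k)_{k ∈ ℕ}` is a recompression chain for `T`. -/
def IsRecompressionChain {α : Type*} (T : List α) (B : ℕ → Set ℕ) : Prop :=
  B 0 = Set.Ico 1 T.length ∧
  (∀ k, B (k + 1) ⊆ B k) ∧
  (∀ k, B k ⊆ Set.Ico 1 T.length) ∧
  (∀ k, (B k).Finite ∧ ((B k).ncard : ℝ) * lam k ≤ 4 * T.length) ∧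
  (∀ k i j : ℕ, alph k ≤ i → i + alph k ≤ T.length → alph k ≤ j → j + alph k ≤ T.length →
    i ∈ B k → frag T (i - alph k) (i + alph k) = frag T (j - alph k) (j + alph k) → j ∈ B k) ∧
  (∀ k i j : ℕ, Consecutive (B k ∪ {0, T.length}) i j →
    (((j - i : ℕ) : ℝ) ≤ 7 / 4 * lam k ∨ (primRootLen (frag T i j) : ℝ) ≤ lam k))

/-- `k(τ) = max{ j : j = 0 ∨ 16·λ_{j-1} ≤ τ }`. -/
noncomputable def kOf (τ : ℕ) : ℕ :=
  sSup {j : ℕ | j = 0 ∨ 16 * lam (j - 1) ≤ (τ : ℝ)}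

/-- The Elias-γ code of a positive integer `x`:
`⌊log₂ x⌋` zeros followed by the binary representation of `x` (MSB first). -/
def eliasGamma (x : ℕ) : List Bool :=
  List.replicate (Nat.log 2 x) false ++ (Nat.bits x).reverse

/-- Sparse encoding, with `z` pending zeros in front of the remaining sequence. -/
def sparseEncAux : ℕ → List ℕ → List Bool
  | z, [] => if z = 0 then [] else false :: eliasGamma z
  | z, 0 :: rest => sparseEncAux (z + 1) rest
  | z, x :: rest =>
      (if z = 0 then [] else false :: eliasGamma z) ++ (true :: eliasGamma x)
        ++ sparseEncAux 0 rest

/-- The sparse encoding `⟨A⟩` of a sequence of non-negative integers. -/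
def sparseEnc (A : List ℕ) : List Bool := sparseEncAux 0 A

/-- Number of bits contributed by the zero-run tokens of the sparse encoding,
with `z` pending zeros. -/
def zeroRunBitsAux : ℕ → List ℕ → ℕ
  | z, [] => if z = 0 then 0 else 2 * Nat.log 2 z + 2
  | z, 0 :: rest => zeroRunBitsAux (z + 1) rest
  | z, _ :: rest => (if z = 0 then 0 else 2 * Nat.log 2 z + 2) + zeroRunBitsAux 0 rest

/-- Number of bits contributed by zero-run tokens to `⟨A⟩`. -/
def zeroRunBits (A : List ℕ) : ℕ := zeroRunBitsAux 0 A

/-- The natural number whose binary representation (MSB first) is `B`. -/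
def bitsToNat (B : List Bool) : ℕ :=
  B.foldl (fun n b => 2 * n + cond b 1 0) 0

/-- The symbol of the zipped string for a column of values. -/
def zipSym (col : List ℕ) : ℕ :=
  if col.all (· == 0) then 0 else bitsToNat (sparseEnc col)

/-- `zip(A_1, …, A_t)` for sequences of common length `n`. -/
def zipSeqs (A : List (List ℕ)) (n : ℕ) : List ℕ :=
  (List.range n).map fun i => zipSym (A.map fun S => S.getD i 0)

/-- Running a deterministic transducer with transition function `δ` from state `s`
on an input string: returns the state sequence `s_0, …, s_n` and the output string. -/
def runAux {Q Γ I : Type*} (δ : Q → I → Q × Γ) : Q → List I → List Q × List Γ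
  | s, [] => ([s], [])
  | s, x :: xs =>
      (s :: (runAux δ (δ s x).1 xs).1, (δ s x).2 :: (runAux δ (δ s x).1 xs).2)

/-- `R_{ℓ,p}(T) = { i : per(T[i..i+ℓ)) ≤ p }`. -/
def RSet {α : Type*} (T : List α) (ℓ p : ℕ) : Set ℕ :=
  {i | i + ℓ ≤ T.length ∧ per (frag T i (i + ℓ)) ≤ p}


section Aux

variable {α : Type*}

/-- `q` is a period on the window `[i, j)` of `T` (absolute indices). -/
def Pd (T : List α) (i j q : ℕ) : Prop :=
  ∀ x, i ≤ x → x + q < j → T[x]? = T[x + q]?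

lemma frag_length (T : List α) {i j : ℕ} (hij : i ≤ j) (hj : j ≤ T.length) :
    (frag T i j).length = j - i := by
  simp [frag]; omega

lemma frag_getElem (T : List α) {i j k : ℕ} (hk : k < j - i) :
    (frag T i j)[k]? = T[i + k]? := by
  simp [frag, List.getElem?_take, hk, List.getElem?_drop]

lemma isPeriod_frag_iff (T : List α) {i j q : ℕ} (hij : i ≤ j) (hj : j ≤ T.length) :
    IsPeriod (frag T i j) q ↔ (1 ≤ q ∧ q ≤ j - i ∧ Pd T i j q) := by
  rw [IsPeriod, frag_length T hij hj]
  constructor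
  · rintro ⟨h1, h2, h3⟩
    refine ⟨h1, h2, fun x hx hxq => ?_⟩
    have hk : (x - i) + q < j - i := by omega
    have := h3 (x - i) hk
    rwa [frag_getElem T (by omega), frag_getElem T (by omega),
      show i + (x - i) = x by omega, show i + (x - i + q) = x + q by omega] at this
  · rintro ⟨h1, h2, h3⟩
    refine ⟨h1, h2, fun k hk => ?_⟩
    rw [frag_getElem T (by omega), frag_getElem T (by omega), ← Nat.add_assoc]
    exact h3 (i + k) (by omega) (by omega)

lemma isPeriod_length {S : List α} (h : 0 < S.length) : IsPeriod S S.length :=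
  ⟨h, le_refl _, fun i hi => absurd hi (by omega)⟩

lemma per_le {S : List α} {q : ℕ} (h : IsPeriod S q) : per S ≤ q := Nat.sInf_le h

lemma isPeriod_per {S : List α} (h : 0 < S.length) : IsPeriod S (per S) := by
  have hm : S.length ∈ {p | IsPeriod S p} := isPeriod_length h
  exact Nat.sInf_mem ⟨_, hm⟩

/-- Bundle: properties of `per (frag T i j)`. -/
lemma per_frag_spec (T : List α) {i j : ℕ} (hij : i < j) (hj : j ≤ T.length) :
    1 ≤ per (frag T i j) ∧ per (frag T i j) ≤ j - i ∧ Pd T i j (per (frag T i j)) := by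
  have h0 : 0 < (frag T i j).length := by rw [frag_length T (le_of_lt hij) hj]; omega
  exact (isPeriod_frag_iff T (le_of_lt hij) hj).mp (isPeriod_per h0)

lemma per_frag_le (T : List α) {i j q : ℕ} (hij : i ≤ j) (hj : j ≤ T.length)
    (h1 : 1 ≤ q) (h2 : q ≤ j - i) (h3 : Pd T i j q) : per (frag T i j) ≤ q :=
  per_le ((isPeriod_frag_iff T hij hj).mpr ⟨h1, h2, h3⟩)

lemma pd_mono {T : List α} {a e i j q : ℕ} (h : Pd T a e q) (hi : a ≤ i) (hj : j ≤ e) :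
    Pd T i j q := fun x hx hxq => h x (le_trans hi hx) (lt_of_lt_of_le hxq hj)

lemma pd_sub {T : List α} {i j p q : ℕ} (hp : Pd T i j p) (hq : Pd T i j q)
    (h1 : 1 ≤ p) (hpq : p < q) (hlen : i + p + q ≤ j) : Pd T i j (q - p) := by
  intro x hx hxq
  rcases lt_or_ge (x + q) j with h | h
  · have e1 : T[x]? = T[x + q]? := hq x hx (by omega)
    have e2 : T[x + (q - p)]? = T[x + (q - p) + p]? := hp (x + (q - p)) (by omega) (by omega)
    rw [show x + (q - p) + p = x + q by omega] at e2
    rw [e1, e2]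
  · have hxp : i + p ≤ x := by omega
    have e1 : T[x - p]? = T[x - p + p]? := hp (x - p) (by omega) (by omega)
    have e2 : T[x - p]? = T[x - p + q]? := hq (x - p) (by omega) (by omega)
    rw [show x - p + p = x by omega] at e1
    rw [show x - p + q = x + (q - p) by omega] at e2
    rw [← e1, e2]

lemma pd_gcd {T : List α} {i j : ℕ} : ∀ N p q, p + q ≤ N → Pd T i j p → Pd T i j q →
    1 ≤ p → 1 ≤ q → i + p + q ≤ j → Pd T i j (Nat.gcd p q) := by
  intro N
  induction N with
  | zero => intro p q h _ _ h1 _ _; omega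
  | succ N ih =>
    intro p q hN hp hq h1 h2 hlen
    rcases Nat.lt_trichotomy p q with h | h | h
    · have := pd_sub hp hq h1 h hlen
      have hg : Nat.gcd p (q - p) = Nat.gcd p q := Nat.gcd_sub_self_right (le_of_lt h)
      rw [← hg]
      exact ih p (q - p) (by omega) hp this h1 (by omega) (by omega)
    · subst h; rwa [Nat.gcd_self]
    · have := pd_sub hq hp h2 h (by omega)
      have hg : Nat.gcd (p - q) q = Nat.gcd p q := by
        rw [Nat.gcd_comm, Nat.gcd_sub_self_right (le_of_lt h), Nat.gcd_comm]
      rw [← hg]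
      exact ih (p - q) q (by omega) this hq (by omega) h2 (by omega)

lemma pd_step {T : List α} {i j g : ℕ} (hg : Pd T i j g) :
    ∀ k x, i ≤ x → x + k * g < j → T[x]? = T[x + k * g]? := by
  intro k
  induction k with
  | zero => intro x _ _; simp
  | succ k ih =>
    intro x hx h
    rcases Nat.eq_zero_or_pos g with h0 | h0
    · simp [h0]
    · have e1 : T[x]? = T[x + k * g]? := ih x hx (by nlinarith)
      have e2 : T[x + k * g]? = T[x + k * g + g]? := hg (x + k * g) (by omega) (by nlinarith [Nat.succ_mul k g])
      rw [e1, e2, show x + k * g + g = x + (k+1) * g by ring]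

lemma pd_eq_of_dvd {T : List α} {i j g x y : ℕ} (hg : Pd T i j g) (hx : i ≤ x)
    (hxy : x ≤ y) (hy : y < j) (hd : g ∣ (y - x)) : T[x]? = T[y]? := by
  obtain ⟨k, hk⟩ := hd
  have hk' : x + k * g = y := by rw [Nat.mul_comm]; omega
  have := pd_step hg k x hx (by omega)
  rwa [hk'] at this

lemma pd_eq_of_dvd' {T : List α} {i j g x y : ℕ} (hg : Pd T i j g) (hx : i ≤ x)
    (hy : i ≤ y) (hx' : x < j) (hy' : y < j) (hd1 : g ∣ (y - x)) (hd2 : g ∣ (x - y)) :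
    T[x]? = T[y]? := by
  rcases le_total x y with h | h
  · exact pd_eq_of_dvd hg hx h hy' hd1
  · exact (pd_eq_of_dvd hg hy h hx' hd2).symm


/-- Extracted facts about a run in `RUNS_{2τ, ⌊τ/3⌋}`. -/
lemma run_spec {T : List α} {τ a e : ℕ} (h : IsRunLP T (2 * τ) (τ / 3) a e) :
    a < e ∧ e ≤ T.length ∧ 1 ≤ per (frag T a e) ∧ per (frag T a e) ≤ τ / 3 ∧
    2 * τ ≤ e - a ∧ Pd T a e (per (frag T a e)) ∧
    (a = 0 ∨ T[a - 1]? ≠ T[a - 1 + per (frag T a e)]?) ∧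
    (e = T.length ∨ T[e]? ≠ T[e - per (frag T a e)]?) := by
  obtain ⟨⟨hae, hel, _, hbl, hbr⟩, hlen, hper⟩ := h
  obtain ⟨h1, _, h3⟩ := per_frag_spec T hae hel
  exact ⟨hae, hel, h1, hper, hlen, h3, hbl, hbr⟩

lemma end_lt_absurd {T : List α} {τ a1 e1 a2 e2 : ℕ}
    (h1 : IsRunLP T (2 * τ) (τ / 3) a1 e1) (h2 : IsRunLP T (2 * τ) (τ / 3) a2 e2)
    (l : ℕ) (hl1 : a1 ≤ l) (hl2 : a2 ≤ l) (hle : l + 2 * (τ / 3) ≤ e1)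
    (hlt : e1 < e2) : False := by
  obtain ⟨hae1, hel1, hp1, hpt1, hln1, hPd1, _, hbr1⟩ := run_spec h1
  obtain ⟨hae2, hel2, hp2, hpt2, hln2, hPd2, _, _⟩ := run_spec h2
  set p1 := per (frag T a1 e1) with hdef1
  set p2 := per (frag T a2 e2) with hdef2
  have hg : Pd T l e1 (Nat.gcd p1 p2) :=
    pd_gcd (p1 + p2) p1 p2 le_rfl (pd_mono hPd1 hl1 le_rfl)
      (pd_mono hPd2 hl2 (le_of_lt hlt)) hp1 hp2 (by omega)
  have hstep : T[e1 - p1]? = T[e1 - p2]? := by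
    refine pd_eq_of_dvd' hg (by omega) (by omega) (by omega) (by omega) ?_ ?_
    · rw [show (e1 - p2) - (e1 - p1) = p1 - p2 by omega]
      exact Nat.dvd_sub (Nat.gcd_dvd_left _ _) (Nat.gcd_dvd_right _ _)
    · rw [show (e1 - p1) - (e1 - p2) = p2 - p1 by omega]
      exact Nat.dvd_sub (Nat.gcd_dvd_right _ _) (Nat.gcd_dvd_left _ _)
  have hext : T[e1 - p2]? = T[e1]? := by
    have := hPd2 (e1 - p2) (by omega) (by omega)
    rwa [show e1 - p2 + p2 = e1 by omega] at this
  rcases hbr1 with h | h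
  · omega
  · exact h (hext.symm.trans hstep.symm)

lemma start_lt_absurd {T : List α} {τ a1 e1 a2 e2 : ℕ}
    (h1 : IsRunLP T (2 * τ) (τ / 3) a1 e1) (h2 : IsRunLP T (2 * τ) (τ / 3) a2 e2)
    (r : ℕ) (hr1 : r ≤ e1) (hr2 : r ≤ e2) (hra : a2 + 2 * (τ / 3) ≤ r)
    (hlt : a1 < a2) : False := by
  obtain ⟨hae1, hel1, hp1, hpt1, hln1, hPd1, _, _⟩ := run_spec h1
  obtain ⟨hae2, hel2, hp2, hpt2, hln2, hPd2, hbl2, _⟩ := run_spec h2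
  set p1 := per (frag T a1 e1) with hdef1
  set p2 := per (frag T a2 e2) with hdef2
  have hg : Pd T a2 r (Nat.gcd p1 p2) :=
    pd_gcd (p1 + p2) p1 p2 le_rfl (pd_mono hPd1 (by omega) hr1)
      (pd_mono hPd2 le_rfl hr2) hp1 hp2 (by omega)
  have hstep : T[a2 - 1 + p1]? = T[a2 - 1 + p2]? := by
    refine pd_eq_of_dvd' hg (by omega) (by omega) (by omega) (by omega) ?_ ?_
    · rw [show (a2 - 1 + p2) - (a2 - 1 + p1) = p2 - p1 by omega]
      exact Nat.dvd_sub (Nat.gcd_dvd_right _ _) (Nat.gcd_dvd_left _ _)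
    · rw [show (a2 - 1 + p1) - (a2 - 1 + p2) = p1 - p2 by omega]
      exact Nat.dvd_sub (Nat.gcd_dvd_left _ _) (Nat.gcd_dvd_right _ _)
  have hext : T[a2 - 1]? = T[a2 - 1 + p1]? := hPd1 (a2 - 1) (by omega) (by omega)
  rcases hbl2 with h | h
  · omega
  · exact h (hext.trans hstep)

/-- Two runs in `RUNS_{2τ,⌊τ/3⌋}` covering the same window coincide. -/
lemma runs_eq {T : List α} {τ a1 e1 a2 e2 i : ℕ}
    (h1 : IsRunLP T (2 * τ) (τ / 3) a1 e1) (h2 : IsRunLP T (2 * τ) (τ / 3) a2 e2)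
    (h1a : a1 ≤ i) (h1e : i + 2 * τ ≤ e1) (h2a : a2 ≤ i) (h2e : i + 2 * τ ≤ e2) :
    a1 = a2 ∧ e1 = e2 := by
  have hq : 2 * (τ / 3) ≤ 2 * τ := by omega
  have he : e1 = e2 := by
    rcases Nat.lt_trichotomy e1 e2 with h | h | h
    · exact absurd (end_lt_absurd h1 h2 i h1a h2a (by omega) h) (fun f => f)
    · exact h
    · exact absurd (end_lt_absurd h2 h1 i h2a h1a (by omega) h) (fun f => f)
  have ha : a1 = a2 := by
    rcases Nat.lt_trichotomy a1 a2 with h | h | h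
    · exact absurd (start_lt_absurd h1 h2 (i + 2 * (τ / 3)) (by omega) (by omega) (by omega) h)
        (fun f => f)
    · exact h
    · exact absurd (start_lt_absurd h2 h1 (i + 2 * (τ / 3)) (by omega) (by omega) (by omega) h)
        (fun f => f)
  exact ⟨ha, he⟩

/-- A periodic window extends to a run covering it. -/
lemma exists_run {T : List α} {τ i : ℕ} (hτ : 1 ≤ τ) (hin : i + 2 * τ ≤ T.length)
    (hq : per (frag T i (i + 2 * τ)) ≤ τ / 3) :
    ∃ a e, IsRunLP T (2 * τ) (τ / 3) a e ∧ a ≤ i ∧ i + 2 * τ ≤ e := by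
  set q := per (frag T i (i + 2 * τ)) with hqdef
  obtain ⟨hq1, hq2, hqPd⟩ := per_frag_spec T (show i < i + 2 * τ by omega) hin
  rw [← hqdef] at hq1 hq2 hqPd
  have hq2' : q ≤ 2 * τ := by omega
  set Es : Set ℕ := {e | i + 2 * τ ≤ e ∧ e ≤ T.length ∧ Pd T i e q} with hEs
  have hEne : (i + 2 * τ) ∈ Es := ⟨le_rfl, hin, hqPd⟩
  have hEbdd : BddAbove Es := ⟨T.length, fun x hx => hx.2.1⟩
  set e₀ := sSup Es with he₀
  have heMem : e₀ ∈ Es := Nat.sSup_mem ⟨_, hEne⟩ hEbdd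
  obtain ⟨he1, he2, hePd⟩ := heMem
  have heMax : e₀ + 1 ∉ Es := fun h => by have := le_csSup hEbdd h; omega
  set As : Set ℕ := {a | a ≤ i ∧ Pd T a (i + 2 * τ) q} with hAs
  have hAne : i ∈ As := ⟨le_rfl, hqPd⟩
  set a₀ := sInf As with ha₀
  have haMem : a₀ ∈ As := Nat.sInf_mem ⟨_, hAne⟩
  obtain ⟨ha1, haPd⟩ := haMem
  -- glued period
  have hPdg : Pd T a₀ e₀ q := by
    intro x hx hxq
    rcases lt_or_ge (x + q) (i + 2 * τ) with h | h
    · exact haPd x hx h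
    · exact hePd x (by omega) hxq
  -- the minimal period of the extension equals q
  have hae : a₀ < e₀ := by omega
  have hpq : per (frag T a₀ e₀) = q := by
    have hle : per (frag T a₀ e₀) ≤ q :=
      per_frag_le T (le_of_lt hae) he2 hq1 (by omega) hPdg
    obtain ⟨hp1, hp2, hpPd⟩ := per_frag_spec T hae he2
    have hge : q ≤ per (frag T a₀ e₀) := by
      rw [hqdef]
      exact per_frag_le T (by omega) hin hp1 (by omega) (pd_mono hpPd ha1 (by omega))
    omega
  -- right maximality
  have hright : e₀ = T.length ∨ T[e₀]? ≠ T[e₀ - q]? := by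
    by_cases h : e₀ = T.length
    · exact Or.inl h
    · refine Or.inr fun heq => heMax ⟨by omega, by omega, fun x hx hxq => ?_⟩
      rcases lt_or_ge (x + q) e₀ with h' | h'
      · exact hePd x hx h'
      · have hx' : x = e₀ - q := by omega
        rw [hx', show e₀ - q + q = e₀ by omega]
        exact heq.symm
  -- left maximality
  have hleft : a₀ = 0 ∨ T[a₀ - 1]? ≠ T[a₀ - 1 + q]? := by
    by_cases h : a₀ = 0
    · exact Or.inl h
    · refine Or.inr fun heq => ?_
      have hmem : a₀ - 1 ∈ As := by
        refine ⟨by omega, fun x hx hxq => ?_⟩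
        rcases le_or_gt a₀ x with h' | h'
        · exact haPd x h' hxq
        · have hx' : x = a₀ - 1 := by omega
          rw [hx']; exact heq
      have := Nat.sInf_le hmem
      omega
  refine ⟨a₀, e₀, ⟨⟨hae, he2, ?_, ?_, ?_⟩, by omega, by omega⟩, ha1, he1⟩
  · rw [hpq]; omega
  · rw [hpq]; exact hleft
  · rw [hpq]; exact hright

/-- A run covering a window bounds the window's period. -/
lemma per_window_le {T : List α} {τ a e i : ℕ} (h : IsRunLP T (2 * τ) (τ / 3) a e)
    (ha : a ≤ i) (he : i + 2 * τ ≤ e) (hτ : 1 ≤ τ) :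
    per (frag T i (i + 2 * τ)) ≤ τ / 3 := by
  obtain ⟨hae, hel, hp1, hpt, hln, hPd, _, _⟩ := run_spec h
  calc per (frag T i (i + 2 * τ)) ≤ per (frag T a e) :=
        per_frag_le T (by omega) (by omega) hp1 (by omega) (pd_mono hPd ha he)
    _ ≤ τ / 3 := hpt

lemma run_len {T : List α} {τ a e : ℕ} (h : IsRunLP T (2 * τ) (τ / 3) a e) : 2 * τ ≤ e - a :=
  h.2.1

/-- Some run of `RUNS_{2τ,⌊τ/3⌋}(T)` covers the window `[i, i + 2τ)`. -/
def Cov {α : Type*} (T : List α) (τ i : ℕ) : Prop :=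
  ∃ a e, IsRunLP T (2 * τ) (τ / 3) a e ∧ a ≤ i ∧ i + 2 * τ ≤ e

end Aux

/-- With `S` marking the start positions and `E` the positions `e − 2τ + 1`
for runs `T[a..e) ∈ RUNS_{2τ,⌊τ/3⌋}(T)`, the partial sums `Σ_{j≤i} (S[j] − E[j])` are in
`{0,1}`, and for `i + 2τ ≤ n` they equal `1` exactly when `per(T[i..i+2τ)) ≤ ⌊τ/3⌋`. -/
theorem statement18 {α : Type*} (T : List α) (n τ : ℕ) (hT : T.length = n)
    (hτ1 : 1 ≤ τ) (hτn : τ < n)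
    (S E : ℕ → ℤ)
    (hS : ∀ a : ℕ, a < n → (S a = 1 ∨ S a = 0) ∧
        (S a = 1 ↔ ∃ e, IsRunLP T (2 * τ) (τ / 3) a e))
    (hE : ∀ i : ℕ, i < n → (E i = 1 ∨ E i = 0) ∧
        (E i = 1 ↔ ∃ a e, IsRunLP T (2 * τ) (τ / 3) a e ∧ e + 1 = i + 2 * τ)) :
    ∀ i : ℕ, i < n →
      ((∑ j ∈ Finset.range (i + 1), (S j - E j)) = 0 ∨
        (∑ j ∈ Finset.range (i + 1), (S j - E j)) = 1) ∧
      (i + 2 * τ ≤ n →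
        (per (frag T i (i + 2 * τ)) ≤ τ / 3 ↔
          (∑ j ∈ Finset.range (i + 1), (S j - E j)) = 1)) := by
  subst hT
  classical
  have hS1 : ∀ j, j < T.length → (∃ e, IsRunLP T (2 * τ) (τ / 3) j e) → S j = 1 :=
    fun j hj h => (hS j hj).2.mpr h
  have hS0 : ∀ j, j < T.length → (¬∃ e, IsRunLP T (2 * τ) (τ / 3) j e) → S j = 0 := by
    intro j hj h
    rcases (hS j hj).1 with h1 | h1
    · exact absurd ((hS j hj).2.mp h1) h
    · exact h1
  have hE1 : ∀ j, j < T.length →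
      (∃ a e, IsRunLP T (2 * τ) (τ / 3) a e ∧ e + 1 = j + 2 * τ) → E j = 1 :=
    fun j hj h => (hE j hj).2.mpr h
  have hE0 : ∀ j, j < T.length →
      (¬∃ a e, IsRunLP T (2 * τ) (τ / 3) a e ∧ e + 1 = j + 2 * τ) → E j = 0 := by
    intro j hj h
    rcases (hE j hj).1 with h1 | h1
    · exact absurd ((hE j hj).2.mp h1) h
    · exact h1
  -- a run starting at j covers the window at j
  have covS : ∀ j, ¬Cov T τ j → ¬∃ e, IsRunLP T (2 * τ) (τ / 3) j e := by
    rintro j hc ⟨e, hr⟩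
    exact hc ⟨j, e, hr, le_rfl, by have := run_len hr; omega⟩
  -- a run with e + 1 = j + 2τ (j ≥ 1) covers the window at j - 1
  have covE : ∀ j, 1 ≤ j → ¬Cov T τ (j - 1) →
      ¬∃ a e, IsRunLP T (2 * τ) (τ / 3) a e ∧ e + 1 = j + 2 * τ := by
    rintro j hj hc ⟨a, e, hr, heq⟩
    exact hc ⟨a, e, hr, by have := run_len hr; omega, by omega⟩
  have key : ∀ i, i < T.length →
      (∑ j ∈ Finset.range (i + 1), (S j - E j)) = if Cov T τ i then 1 else 0 := by
    intro i
    induction i with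
    | zero =>
      intro h0
      rw [Finset.sum_range_one]
      have hE' : E 0 = 0 := by
        refine hE0 0 h0 ?_
        rintro ⟨a, e, hr, heq⟩
        have := run_len hr
        omega
      by_cases hc : Cov T τ 0
      · obtain ⟨a, e, hr, ha, he⟩ := hc
        have ha0 : a = 0 := by omega
        have hS' : S 0 = 1 := hS1 0 h0 ⟨e, ha0 ▸ hr⟩
        have hcv : Cov T τ 0 := ⟨a, e, hr, ha, he⟩
        rw [if_pos hcv, hS', hE']
        norm_num
      · have hS' : S 0 = 0 := hS0 0 h0 (covS 0 hc)
        rw [if_neg hc, hS', hE']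
        norm_num
    | succ i ih =>
      intro hj1
      have hji : i < T.length := by omega
      rw [Finset.sum_range_succ, ih hji]
      by_cases hci : Cov T τ i <;> by_cases hci1 : Cov T τ (i + 1)
      · -- both covered: the same run covers both, no start/end token at i+1
        obtain ⟨a, e, hr, ha, he⟩ := hci1
        have haa : a ≤ i := by
          by_contra hcon
          have ha' : a = i + 1 := by omega
          obtain ⟨a', e', hr', ha'', he''⟩ := hci
          by_cases hb : i + 1 + 2 * τ ≤ e'
          · have := runs_eq hr hr' ha he (by omega) hb
            omega
          · exact end_lt_absurd hr' hr (i + 1) (by omega) (by omega) (by omega) (by omega)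
        have hS' : S (i + 1) = 0 := by
          refine hS0 _ hj1 ?_
          rintro ⟨e'', hr''⟩
          have := runs_eq hr'' hr le_rfl (by have := run_len hr''; omega) (by omega) (by omega)
          omega
        have hE' : E (i + 1) = 0 := by
          refine hE0 _ hj1 ?_
          rintro ⟨a'', e'', hr'', heq⟩
          have hcov : a'' ≤ i ∧ i + 2 * τ ≤ e'' := by have := run_len hr''; omega
          have := runs_eq hr'' hr hcov.1 hcov.2 haa (by omega)
          omega
        have hcv : Cov T τ i := ⟨a, e, hr, haa, by omega⟩
        have hcv1 : Cov T τ (i + 1) := ⟨a, e, hr, ha, he⟩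
        rw [if_pos hcv, if_pos hcv1, hS', hE']
        norm_num
      · -- covered at i but not i+1: the run ends exactly, end token fires
        obtain ⟨a, e, hr, ha, he⟩ := hci
        have hee : e = i + 2 * τ := by
          by_contra hcon
          exact hci1 ⟨a, e, hr, by omega, by omega⟩
        have hS' : S (i + 1) = 0 := hS0 _ hj1 (covS _ hci1)
        have hE' : E (i + 1) = 1 := hE1 _ hj1 ⟨a, e, hr, by omega⟩
        have hcv : Cov T τ i := ⟨a, e, hr, ha, he⟩
        rw [if_pos hcv, if_neg hci1, hS', hE']
        norm_num
      · -- newly covered at i+1: the run starts exactly, start token fires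
        obtain ⟨a, e, hr, ha, he⟩ := hci1
        have haa : a = i + 1 := by
          by_contra hcon
          exact hci ⟨a, e, hr, by omega, by omega⟩
        have hS' : S (i + 1) = 1 := hS1 _ hj1 ⟨e, haa ▸ hr⟩
        have hE' : E (i + 1) = 0 := hE0 _ hj1 (covE (i + 1) (by omega) (by simpa using hci))
        have hcv1 : Cov T τ (i + 1) := ⟨a, e, hr, ha, he⟩
        rw [if_neg hci, if_pos hcv1, hS', hE']
        norm_num
      · have hS' : S (i + 1) = 0 := hS0 _ hj1 (covS _ hci1)
        have hE' : E (i + 1) = 0 := hE0 _ hj1 (covE (i + 1) (by omega) (by simpa using hci))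
        rw [if_neg hci, if_neg hci1, hS', hE']
        norm_num
  intro i hi
  have hkey := key i hi
  constructor
  · by_cases hc : Cov T τ i
    · right; rw [hkey, if_pos hc]
    · left; rw [hkey, if_neg hc]
  · intro h2
    constructor
    · intro hper
      have hcv : Cov T τ i := exists_run hτ1 h2 hper
      rw [hkey, if_pos hcv]
    · intro h1
      have hc : Cov T τ i := by
        by_contra hc
        rw [hkey, if_neg hc] at h1
        norm_num at h1
      obtain ⟨a, e, hr, ha, he⟩ := hc
      exact per_window_le hr ha he hτ1

end SyncFormal
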